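/- There exist groups G and H and a surjective group homomorphism φ : G → H whose kernel is contained in the center of G, such that the commutator subgroup [H, H] is finitely generated (indeed trivial) but the commutator subgroup [G, G] is not finitely generated. (For instance, G = F/[F, [F, F]] and H = F/[F, F], where F is a free group on a countably infinite basis.) -/

import Mathlib

/-!
Take `G = ℕ → D₄`, where `D₄` is the dihedral group of order 8, and let `H` be its
abelianization. Since `[D₄, D₄] = {1, r²}` is central, so is `[G, G]`; hence `G → H` is a central
extension, and `[H, H]` is trivial. With `a = r` and `b = sr₀` one has `[a, b] = r² ≠ 1`, and for
every `s ⊆ ℕ` the commutator of the pointwise maps `𝟙_s · a` and `b` is `𝟙_s · [a, b]`. So `[G, G]`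
contains a copy of `Set ℕ`, is uncountable, and cannot be finitely generated.
-/

open Subgroup
open scoped commutatorElement

theorem Subgroup.FG.countable {G : Type*} [Group G] {K : Subgroup G} (hK : K.FG) :
    Countable K := by
  obtain ⟨S, rfl⟩ := hK
  have hrange : (FreeGroup.lift ((↑) : ((S : Set G) : Type _) → G)).range = closure S := by
    rw [FreeGroup.range_lift_eq_closure, Subtype.range_coe]
  rw [← hrange]
  exact (MonoidHom.rangeRestrict_surjective _).countable

theorem commutator_pi_le_center {ι G : Type*} [Group G] (h : commutator G ≤ center G) :
    commutator (ι → G) ≤ center (ι → G) := by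
  rw [Subgroup.center_pi, commutator_def, ← pi_top Set.univ]
  exact (commutator_pi_pi_le _ _).trans fun f hf i hi => h (hf i hi)

theorem commutatorElement_mulIndicator_const {ι G : Type*} [Group G] (s : Set ι) (a b : G) :
    ⁅s.mulIndicator fun _ => a, fun _ : ι => b⁆ = s.mulIndicator fun _ => ⁅a, b⁆ := by
  funext i
  by_cases hi : i ∈ s <;> simp [Set.mulIndicator, hi, commutatorElement_def]

theorem not_countable_commutator_pi_nat {G : Type*} [Group G] {a b : G} (hab : ⁅a, b⁆ ≠ 1) :
    ¬ Countable (commutator (ℕ → G)) := by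
  intro _
  let e : Set ℕ → commutator (ℕ → G) := fun s =>
    ⟨s.mulIndicator fun _ => ⁅a, b⁆, commutatorElement_mulIndicator_const s a b ▸
      commutator_mem_commutator (mem_top _) (mem_top _)⟩
  have he : Function.Injective e := fun s t hst => by
    simpa [e, Set.mulSupport_mulIndicator, Function.mulSupport_const hab] using
      congrArg (Function.mulSupport ∘ Subtype.val) hst
  obtain ⟨f, hf⟩ := exists_injective_nat (commutator (ℕ → G))
  exact Function.cantor_injective (f ∘ e) (hf.comp he)

namespace DihedralGroup

theorem commutator_le_center_four : commutator (DihedralGroup 4) ≤ center (DihedralGroup 4) := by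
  have key : ∀ a b g : DihedralGroup 4, g * ⁅a, b⁆ = ⁅a, b⁆ * g := by decide
  rw [commutator_def, commutator_le]
  exact fun a _ b _ => mem_center_iff.mpr (key a b)

theorem commutatorElement_r_one_sr_zero_ne_one :
    ⁅(r 1 : DihedralGroup 4), (sr 0 : DihedralGroup 4)⁆ ≠ 1 := by
  decide

end DihedralGroup

theorem exists_central_extension_commutator_not_fg :
    ∃ (G H : Type) (_ : Group G) (_ : Group H) (φ : G →* H),
      Function.Surjective φ ∧ φ.ker ≤ Subgroup.center G ∧
        commutator H = ⊥ ∧ ¬ (commutator G).FG := by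
  refine ⟨ℕ → DihedralGroup 4, Abelianization (ℕ → DihedralGroup 4), inferInstance,
    inferInstance, Abelianization.of, QuotientGroup.mk_surjective, ?_, commutator_eq_bot _, ?_⟩
  · rw [Abelianization.ker_of]
    exact commutator_pi_le_center DihedralGroup.commutator_le_center_four
  · exact fun hfg => not_countable_commutator_pi_nat
      DihedralGroup.commutatorElement_r_one_sr_zero_ne_one hfg.countable
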